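/- arXiv:2012.11752 — 2 statements merged into one kernel-verified Lean document; each statement's English description precedes it below -/
import Mathlib

section
/- Let m = 3, r ∈ ℕ, and λ ∈ ℂ. Let W_{r,λ} denote the set of vertex functions f on C_3^N supported in Σ_r with A_- f = 0 and A_0 f = λ • f, and let V_{r,λ} be the ℂ-linear span of {A_+^k f : k ∈ ℕ, f ∈ W_{r,λ}}. Then V_{r,λ} is invariant under the adjacency operator: for every g ∈ V_{r,λ}, A g ∈ V_{r,λ}. -/
open Finset

/-- The standard generator `e_k` of `(ZMod m)^N`: equal to `1` in coordinate `k`,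
`0` elsewhere. -/
def eV (N m : ℕ) (k : Fin N) : Fin N → ZMod m :=
  fun j => if j = k then 1 else 0

/-- Adjacency in the Cayley graph `C_m^N`: `v ∼ w` iff `w = v + e_k` or `w = v - e_k`
for some coordinate `k`. -/
def adj (N m : ℕ) (v w : Fin N → ZMod m) : Prop :=
  ∃ k : Fin N, w = v + eV N m k ∨ w = v - eV N m k

/-- The `k`-th level of a vertex: `d_k(v) = min((v k).val, m - (v k).val)`. -/
def lev (N m : ℕ) (v : Fin N → ZMod m) (k : Fin N) : ℕ :=
  min ((v k).val) (m - (v k).val)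

/-- Path distance of a vertex to the origin: `d(v) = Σ_k d_k(v)`. -/
def distO (N m : ℕ) (v : Fin N → ZMod m) : ℕ :=
  ∑ k : Fin N, lev N m v k

open Classical in
/-- Adjacency operator: `(A f)(v) = Σ_{w ∼ v} f(w)`. -/
noncomputable def Aop (N m : ℕ) [NeZero m] (f : (Fin N → ZMod m) → ℂ) :
    (Fin N → ZMod m) → ℂ :=
  fun v => ∑ w : Fin N → ZMod m, if adj N m v w then f w else 0

open Classical in
/-- Outer adjacency: `(A₊ f)(v) = Σ_{w ∼ v, d(w) < d(v)} f(w)`. -/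
noncomputable def Aplus (N m : ℕ) [NeZero m] (f : (Fin N → ZMod m) → ℂ) :
    (Fin N → ZMod m) → ℂ :=
  fun v => ∑ w : Fin N → ZMod m,
    if adj N m v w ∧ distO N m w < distO N m v then f w else 0

open Classical in
/-- Inner adjacency: `(A₋ f)(v) = Σ_{w ∼ v, d(w) > d(v)} f(w)`. -/
noncomputable def Aminus (N m : ℕ) [NeZero m] (f : (Fin N → ZMod m) → ℂ) :
    (Fin N → ZMod m) → ℂ :=
  fun v => ∑ w : Fin N → ZMod m,
    if adj N m v w ∧ distO N m v < distO N m w then f w else 0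

open Classical in
/-- Neutral adjacency: `(A₀ f)(v) = Σ_{w ∼ v, d(w) = d(v)} f(w)`. -/
noncomputable def Azero (N m : ℕ) [NeZero m] (f : (Fin N → ZMod m) → ℂ) :
    (Fin N → ZMod m) → ℂ :=
  fun v => ∑ w : Fin N → ZMod m,
    if adj N m v w ∧ distO N m w = distO N m v then f w else 0

/-- The `k`-reflection `ṽ_k` of a vertex: negate the `k`-th coordinate. -/
def reflV (N m : ℕ) (k : Fin N) (v : Fin N → ZMod m) : Fin N → ZMod m :=
  Function.update v k (-(v k))

/-- Level-one reflection sum: `(R₁ f)(v) = Σ_{k : d_k(v) = 1} f(ṽ_k)`. -/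
noncomputable def R1 (N m : ℕ) (f : (Fin N → ZMod m) → ℂ) :
    (Fin N → ZMod m) → ℂ :=
  fun v => ∑ k ∈ Finset.univ.filter (fun k => lev N m v k = 1), f (reflV N m k v)

/-- Number of coordinates of `v` at level `ℓ`. -/
def cardLev (N m : ℕ) (v : Fin N → ZMod m) (ℓ : ℕ) : ℕ :=
  (Finset.univ.filter (fun k => lev N m v k = ℓ)).card

/-- `W_{r,λ}`: vertex functions supported in `Σ_r`, in the kernel of `A₋`,
that are `λ`-eigenvectors of `A₀`. -/
def Wspace (N r : ℕ) (lam : ℂ) : Set ((Fin N → ZMod 3) → ℂ) :=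
  {f | (∀ v, distO N 3 v ≠ r → f v = 0) ∧ Aminus N 3 f = 0 ∧ Azero N 3 f = lam • f}

/-- `V_{r,λ}`: the span of `{A₊^k f : k ∈ ℕ, f ∈ W_{r,λ}}`. -/
noncomputable def Vspace (N r : ℕ) (lam : ℂ) : Submodule ℂ ((Fin N → ZMod 3) → ℂ) :=
  Submodule.span ℂ {g | ∃ k : ℕ, ∃ f ∈ Wspace N r lam, g = (Aplus N 3)^[k] f}

/-! On `C_3^N` each of `A₊`, `A₀`, `A₋` is a sum over the coordinates `k` of an operator that
only changes coordinate `k`, through a `3 × 3` kernel. Operators at distinct coordinates commute,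
so commutators of such sums reduce to commutators of the kernels, which give
`[A₀, A₊] = A₊` and `[A₋, A₊] = 2N - 3d - A₀`. Hence for `f ∈ W_{r,λ}` the function `A₊^k f`
lives on `Σ_{r+k}`, is a `(λ + k)`-eigenvector of `A₀`, and
`A₋ A₊^{k+1} f ∈ A₊ (A₋ A₊^k f) + ℂ A₊^k f`. By induction on `k`, `V_{r,λ}` is invariant under
`A₊`, `A₀` and `A₋`, hence under `A = A₊ + A₋ + A₀`. -/

open Function Matrix

section LocalOp

variable {ι α R : Type*} [DecidableEq ι] [Fintype α]

def localOp [CommSemiring R] (k : ι) (K : Matrix α α R) : Module.End R ((ι → α) → R) where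
  toFun f v := ∑ a, K (v k) a * f (update v k a)
  map_add' f g := by ext v; simp [mul_add, sum_add_distrib]
  map_smul' c f := by ext v; simp [mul_sum, mul_left_comm]

theorem localOp_apply [CommSemiring R] (k : ι) (K : Matrix α α R) (f : (ι → α) → R)
    (v : ι → α) : localOp k K f v = ∑ a, K (v k) a * f (update v k a) := rfl

theorem localOp_mul [CommSemiring R] (k : ι) (K L : Matrix α α R) :
    localOp k (K * L) = localOp k K * localOp k L := by
  ext f v
  simp only [localOp_apply, Module.End.mul_apply, update_self, update_idem, mul_apply,
    sum_mul, mul_sum, mul_assoc]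
  exact sum_comm

theorem localOp_sub [CommRing R] (k : ι) (K L : Matrix α α R) :
    localOp k (K - L) = localOp k K - localOp k L := by
  ext f v
  simp [localOp_apply, sub_mul]

theorem localOp_commute [CommSemiring R] {j k : ι} (hjk : j ≠ k) (K L : Matrix α α R) :
    Commute (localOp j K) (localOp k L) := by
  ext f v
  simp only [Module.End.mul_apply, localOp_apply, update_of_ne hjk, update_of_ne hjk.symm,
    mul_sum, mul_left_comm (K _ _)]
  rw [sum_comm]
  exact sum_congr rfl fun b _ => sum_congr rfl fun a _ => by rw [update_comm hjk]

def sumLocalOp [Fintype ι] [CommSemiring R] (K : Matrix α α R) :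
    Module.End R ((ι → α) → R) :=
  ∑ k, localOp k K

theorem sumLocalOp_apply [Fintype ι] [CommSemiring R] (K : Matrix α α R) (f : (ι → α) → R)
    (v : ι → α) : sumLocalOp K f v = ∑ k, ∑ a, K (v k) a * f (update v k a) := by
  simp [sumLocalOp, LinearMap.sum_apply, localOp_apply]

theorem sumLocalOp_sub [Fintype ι] [CommRing R] (K L : Matrix α α R) :
    sumLocalOp (ι := ι) (K - L) = sumLocalOp K - sumLocalOp L := by
  simp [sumLocalOp, localOp_sub, sum_sub_distrib]

theorem sumLocalOp_commutator [Fintype ι] [CommRing R] (K L : Matrix α α R) :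
    sumLocalOp (ι := ι) K * sumLocalOp L - sumLocalOp L * sumLocalOp K
      = sumLocalOp (K * L - L * K) := by
  calc _ = ∑ j : ι, ∑ k, (localOp j K * localOp k L - localOp k L * localOp j K) := by
        rw [sumLocalOp, sumLocalOp, sum_mul_sum, sum_mul_sum,
          sum_comm (f := fun k j => localOp k L * localOp j K)]
        simp only [sum_sub_distrib]
    _ = ∑ j : ι, ∑ k, if j = k then localOp k (K * L - L * K) else 0 := by
        refine sum_congr rfl fun j _ => sum_congr rfl fun k _ => ?_
        split_ifs with hjk
        · rw [hjk, localOp_sub, localOp_mul, localOp_mul]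
        · exact sub_eq_zero.mpr (localOp_commute hjk K L).eq
    _ = _ := by simp [sumLocalOp]

theorem sumLocalOp_diagonal_apply [Fintype ι] [DecidableEq α] [CommSemiring R] (c : α → R)
    (f : (ι → α) → R) (v : ι → α) :
    sumLocalOp (diagonal c) f v = (∑ k, c (v k)) * f v := by
  simp [sumLocalOp_apply, diagonal_apply, sum_mul]

end LocalOp

section Cube

variable {N : ℕ}

theorem zmod_three_cases (x : ZMod 3) : x = 0 ∨ x = 1 ∨ x = 2 := by
  revert x; decide

theorem sum_zmod_three {M : Type*} [AddCommMonoid M] (g : ZMod 3 → M) :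
    ∑ x, g x = g 0 + g 1 + g 2 :=
  Fin.sum_univ_three g

theorem add_eV (m : ℕ) (v : Fin N → ZMod m) (k : Fin N) :
    v + eV N m k = update v k (v k + 1) := by
  ext j; by_cases h : j = k <;> simp [eV, h]

theorem sub_eV (m : ℕ) (v : Fin N → ZMod m) (k : Fin N) :
    v - eV N m k = update v k (v k - 1) := by
  ext j; by_cases h : j = k <;> simp [eV, h]

theorem adj_three_iff (v w : Fin N → ZMod 3) :
    adj N 3 v w ↔ ∃ k a, a ≠ v k ∧ update v k a = w := by
  have h3 : ∀ x a : ZMod 3, a ≠ x ↔ a = x + 1 ∨ a = x - 1 := by decide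
  simp only [adj, add_eV, sub_eV]
  constructor
  · rintro ⟨k, rfl | rfl⟩
    exacts [⟨k, _, (h3 _ _).2 (Or.inl rfl), rfl⟩, ⟨k, _, (h3 _ _).2 (Or.inr rfl), rfl⟩]
  · rintro ⟨k, a, ha, rfl⟩
    rcases (h3 _ _).1 ha with rfl | rfl
    exacts [⟨k, Or.inl rfl⟩, ⟨k, Or.inr rfl⟩]

theorem eq_and_eq_of_update_eq_update {ι α : Type*} [DecidableEq ι] {v : ι → α} {j k : ι}
    {a b : α} (ha : a ≠ v j) (h : update v j a = update v k b) : j = k ∧ a = b := by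
  have hj := congrFun h j
  by_cases hjk : j = k
  · subst hjk; simpa using hj
  · exact absurd (by simpa [update_of_ne hjk] using hj) ha

open Classical in
theorem sum_adj_three (F : (Fin N → ZMod 3) → ℂ) (v : Fin N → ZMod 3) :
    ∑ w, (if adj N 3 v w then F w else 0)
      = ∑ k, ∑ a, if a ≠ v k then F (update v k a) else 0 := by
  rw [← sum_filter, ← Fintype.sum_prod_type', ← sum_filter]
  symm
  refine sum_bij (fun p _ => update v p.1 p.2) ?_ ?_ ?_ (fun _ _ => rfl)
  · intro p hp
    exact mem_filter.mpr
      ⟨mem_univ _, (adj_three_iff v _).mpr ⟨p.1, p.2, (mem_filter.mp hp).2, rfl⟩⟩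
  · rintro ⟨j, a⟩ hp ⟨k, b⟩ - h
    obtain ⟨rfl, rfl⟩ := eq_and_eq_of_update_eq_update (mem_filter.mp hp).2 h
    rfl
  · intro w hw
    obtain ⟨k, a, ha, rfl⟩ := (adj_three_iff v w).mp (mem_filter.mp hw).2
    exact ⟨(k, a), mem_filter.mpr ⟨mem_univ _, ha⟩, rfl⟩

theorem lev_three (v : Fin N → ZMod 3) (k : Fin N) :
    lev N 3 v k = if v k = 0 then 0 else 1 := by
  unfold lev; generalize v k = x; revert x; decide

theorem distO_update_three (v : Fin N → ZMod 3) (k : Fin N) (a : ZMod 3) :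
    distO N 3 (update v k a) + (if v k = 0 then 0 else 1)
      = distO N 3 v + (if a = 0 then 0 else 1) := by
  have hlev : ∀ j,
      lev N 3 (update v k a) j = update (lev N 3 v) k (if a = 0 then 0 else 1) j := by
    intro j; by_cases h : j = k
    · subst h; simp [lev_three]
    · simp [lev_three, update_of_ne h]
  simp only [distO, hlev, sum_update_of_mem (mem_univ k), ← lev_three,
    ← add_sum_erase univ (lev N 3 v) (mem_univ k), sdiff_singleton_eq_erase]
  ring

end Cube

section Kernels

variable {N : ℕ}

def outerKernel : Matrix (ZMod 3) (ZMod 3) ℂ := of fun x a => if x ≠ 0 ∧ a = 0 then 1 else 0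

def neutralKernel : Matrix (ZMod 3) (ZMod 3) ℂ :=
  of fun x a => if x ≠ 0 ∧ a = -x then 1 else 0

def innerKernel : Matrix (ZMod 3) (ZMod 3) ℂ := of fun x a => if x = 0 ∧ a ≠ 0 then 1 else 0

theorem distO_update_lt_iff (v : Fin N → ZMod 3) (k : Fin N) (a : ZMod 3) :
    distO N 3 (update v k a) < distO N 3 v ↔ v k ≠ 0 ∧ a = 0 := by
  have := distO_update_three v k a
  by_cases hx : v k = 0 <;> by_cases ha : a = 0 <;> simp [hx, ha] at this ⊢ <;> omega

theorem distO_lt_update_iff (v : Fin N → ZMod 3) (k : Fin N) (a : ZMod 3) :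
    distO N 3 v < distO N 3 (update v k a) ↔ v k = 0 ∧ a ≠ 0 := by
  have := distO_update_three v k a
  by_cases hx : v k = 0 <;> by_cases ha : a = 0 <;> simp [hx, ha] at this ⊢ <;> omega

theorem distO_update_eq_iff (v : Fin N → ZMod 3) (k : Fin N) (a : ZMod 3) :
    distO N 3 (update v k a) = distO N 3 v ↔ (v k = 0 ↔ a = 0) := by
  have := distO_update_three v k a
  by_cases hx : v k = 0 <;> by_cases ha : a = 0 <;> simp [hx, ha] at this ⊢ <;> omega

open Classical in
theorem sum_adj_three_and (P : (Fin N → ZMod 3) → Prop) [DecidablePred P]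
    (f : (Fin N → ZMod 3) → ℂ) (v : Fin N → ZMod 3) :
    ∑ w, (if adj N 3 v w ∧ P w then f w else 0)
      = ∑ k, ∑ a, if a ≠ v k ∧ P (update v k a) then f (update v k a) else 0 := by
  simp only [ite_and]
  exact sum_adj_three _ v

theorem Aplus_three : Aplus N 3 = ⇑(sumLocalOp (ι := Fin N) outerKernel) := by
  ext f v
  simp only [Aplus, sum_adj_three_and, distO_update_lt_iff, sumLocalOp_apply, outerKernel,
    of_apply, ite_mul, one_mul, zero_mul]
  refine sum_congr rfl fun k _ => sum_congr rfl fun a _ => if_congr ?_ rfl rfl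
  generalize v k = x
  revert x a; decide

theorem Azero_three : Azero N 3 = ⇑(sumLocalOp (ι := Fin N) neutralKernel) := by
  ext f v
  simp only [Azero, sum_adj_three_and, distO_update_eq_iff, sumLocalOp_apply, neutralKernel,
    of_apply, ite_mul, one_mul, zero_mul]
  refine sum_congr rfl fun k _ => sum_congr rfl fun a _ => if_congr ?_ rfl rfl
  generalize v k = x
  revert x a; decide

theorem Aminus_three : Aminus N 3 = ⇑(sumLocalOp (ι := Fin N) innerKernel) := by
  ext f v
  simp only [Aminus, sum_adj_three_and, distO_lt_update_iff, sumLocalOp_apply, innerKernel,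
    of_apply, ite_mul, one_mul, zero_mul]
  refine sum_congr rfl fun k _ => sum_congr rfl fun a _ => if_congr ?_ rfl rfl
  generalize v k = x
  revert x a; decide

theorem neutralKernel_commutator_outerKernel :
    neutralKernel * outerKernel - outerKernel * neutralKernel = outerKernel := by
  ext x b
  simp only [Matrix.sub_apply, Matrix.mul_apply, sum_zmod_three, neutralKernel, outerKernel,
    of_apply]
  rcases zmod_three_cases x with rfl | rfl | rfl <;>
    rcases zmod_three_cases b with rfl | rfl | rfl <;> simp +decide

theorem innerKernel_commutator_outerKernel :
    innerKernel * outerKernel - outerKernel * innerKernel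
      = diagonal (fun x => if x = 0 then 2 else -1) - neutralKernel := by
  ext x b
  simp only [Matrix.sub_apply, Matrix.mul_apply, sum_zmod_three, neutralKernel, outerKernel,
    innerKernel, of_apply, diagonal_apply]
  rcases zmod_three_cases x with rfl | rfl | rfl <;>
    rcases zmod_three_cases b with rfl | rfl | rfl <;> norm_num +decide

end Kernels

section Ladder

variable {N : ℕ}

theorem Aop_eq_add (m : ℕ) [NeZero m] (f : (Fin N → ZMod m) → ℂ) :
    Aop N m f = Aplus N m f + Aminus N m f + Azero N m f := by
  ext v
  simp only [Aop, Aplus, Aminus, Azero, Pi.add_apply, ← sum_add_distrib]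
  refine sum_congr rfl fun w _ => ?_
  by_cases hvw : adj N m v w
  · simp only [hvw, true_and]
    split_ifs <;> first | omega | simp
  · simp [hvw]

theorem Azero_Aplus (f : (Fin N → ZMod 3) → ℂ) :
    Azero N 3 (Aplus N 3 f) = Aplus N 3 (Azero N 3 f) + Aplus N 3 f := by
  have h := congrArg (· f) (sumLocalOp_commutator (ι := Fin N) neutralKernel outerKernel)
  simp only [neutralKernel_commutator_outerKernel, LinearMap.sub_apply, Module.End.mul_apply] at h
  rw [Azero_three, Aplus_three]
  linear_combination h

theorem sum_ite_two_neg_one_eq (v : Fin N → ZMod 3) :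
    ∑ k, (if v k = 0 then 2 else -1 : ℂ) = 2 * N - 3 * distO N 3 v := by
  calc ∑ k, (if v k = 0 then 2 else -1 : ℂ) = ∑ k, (2 - 3 * (lev N 3 v k : ℂ)) :=
        sum_congr rfl fun k _ => by rw [lev_three]; split_ifs <;> norm_num
    _ = 2 * N - 3 * distO N 3 v := by simp [distO, sum_sub_distrib, mul_sum, mul_comm]

theorem Aminus_Aplus_apply (f : (Fin N → ZMod 3) → ℂ) (v : Fin N → ZMod 3) :
    Aminus N 3 (Aplus N 3 f) v
      = Aplus N 3 (Aminus N 3 f) v + (2 * N - 3 * distO N 3 v) * f v - Azero N 3 f v := by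
  have h := congrArg (· f v) (sumLocalOp_commutator (ι := Fin N) innerKernel outerKernel)
  simp only [innerKernel_commutator_outerKernel, LinearMap.sub_apply, Module.End.mul_apply,
    sumLocalOp_sub, Pi.sub_apply, sumLocalOp_diagonal_apply, sum_ite_two_neg_one_eq] at h
  rw [Aminus_three, Aplus_three, Azero_three]
  linear_combination h

end Ladder

section Invariance

variable {N r : ℕ} {lam : ℂ} {f g : (Fin N → ZMod 3) → ℂ}

theorem Aplus_eq_zero_of_support {s : ℕ} (hg : ∀ v, distO N 3 v ≠ s → g v = 0)
    (v : Fin N → ZMod 3) (hv : distO N 3 v ≠ s + 1) : Aplus N 3 g v = 0 := by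
  rw [Aplus_three, sumLocalOp_apply]
  refine sum_eq_zero fun k _ => sum_eq_zero fun a _ => ?_
  simp only [outerKernel, of_apply]
  split_ifs with h
  · obtain ⟨hvk, rfl⟩ := h
    have := distO_update_three v k 0
    rw [if_neg hvk, if_pos rfl] at this
    rw [hg _ (by omega), mul_zero]
  · rw [zero_mul]

theorem Aplus_iterate_eq_zero_of_support (hf : ∀ v, distO N 3 v ≠ r → f v = 0) (k : ℕ)
    (v : Fin N → ZMod 3) (hv : distO N 3 v ≠ r + k) : (Aplus N 3)^[k] f v = 0 := by
  induction k generalizing v with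
  | zero => exact hf v hv
  | succ k ih =>
    rw [iterate_succ_apply']
    exact Aplus_eq_zero_of_support ih v hv

theorem Azero_Aplus_iterate (hf : Azero N 3 f = lam • f) (k : ℕ) :
    Azero N 3 ((Aplus N 3)^[k] f) = (lam + k) • (Aplus N 3)^[k] f := by
  induction k with
  | zero => simpa using hf
  | succ k ih =>
    rw [iterate_succ_apply', Azero_Aplus, ih, Aplus_three, map_smul]
    push_cast
    module

theorem Aminus_Aplus_of_support {s : ℕ} {μ : ℂ} (hg : ∀ v, distO N 3 v ≠ s → g v = 0)
    (hμ : Azero N 3 g = μ • g) :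
    Aminus N 3 (Aplus N 3 g) = Aplus N 3 (Aminus N 3 g) + (2 * N - 3 * s - μ) • g := by
  ext v
  rw [Aminus_Aplus_apply, hμ]
  simp only [Pi.add_apply, Pi.smul_apply, smul_eq_mul]
  by_cases hv : distO N 3 v = s
  · rw [hv]; ring
  · rw [hg v hv]; ring

theorem Vspace_le_comap {T : Module.End ℂ ((Fin N → ZMod 3) → ℂ)}
    (hT : ∀ k, ∀ f ∈ Wspace N r lam, T ((Aplus N 3)^[k] f) ∈ Vspace N r lam) :
    Vspace N r lam ≤ (Vspace N r lam).comap T :=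
  Submodule.span_le.mpr fun _ ⟨k, f, hf, hg⟩ => hg ▸ hT k f hf

theorem Aplus_iterate_mem_Vspace (hf : f ∈ Wspace N r lam) (k : ℕ) :
    (Aplus N 3)^[k] f ∈ Vspace N r lam :=
  Submodule.subset_span ⟨k, f, hf, rfl⟩

theorem Aplus_mem_Vspace (hg : g ∈ Vspace N r lam) : Aplus N 3 g ∈ Vspace N r lam := by
  rw [Aplus_three]
  refine Vspace_le_comap (fun k f hf => ?_) hg
  rw [← Aplus_three, ← iterate_succ_apply' (Aplus N 3)]
  exact Aplus_iterate_mem_Vspace hf (k + 1)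

theorem Azero_mem_Vspace (hg : g ∈ Vspace N r lam) : Azero N 3 g ∈ Vspace N r lam := by
  rw [Azero_three]
  refine Vspace_le_comap (fun k f hf => ?_) hg
  rw [← Azero_three, Azero_Aplus_iterate hf.2.2]
  exact Submodule.smul_mem _ _ (Aplus_iterate_mem_Vspace hf k)

theorem Aminus_Aplus_iterate_mem_Vspace (hf : f ∈ Wspace N r lam) (k : ℕ) :
    Aminus N 3 ((Aplus N 3)^[k] f) ∈ Vspace N r lam := by
  induction k with
  | zero => simp [hf.2.1]
  | succ k ih =>
    rw [iterate_succ_apply', Aminus_Aplus_of_support (Aplus_iterate_eq_zero_of_support hf.1 k)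
      (Azero_Aplus_iterate hf.2.2 k)]
    exact add_mem (Aplus_mem_Vspace ih) (Submodule.smul_mem _ _ (Aplus_iterate_mem_Vspace hf k))

theorem Aminus_mem_Vspace (hg : g ∈ Vspace N r lam) : Aminus N 3 g ∈ Vspace N r lam := by
  rw [Aminus_three]
  refine Vspace_le_comap (fun k f hf => ?_) hg
  rw [← Aminus_three]
  exact Aminus_Aplus_iterate_mem_Vspace hf k

end Invariance

theorem adjacency_invariant_C3_general (N r : ℕ) (lam : ℂ) :
    ∀ g ∈ Vspace N r lam, Aop N 3 g ∈ Vspace N r lam := by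
  intro g hg
  rw [Aop_eq_add]
  exact add_mem (add_mem (Aplus_mem_Vspace hg) (Aminus_mem_Vspace hg)) (Azero_mem_Vspace hg)

/-- `V_{r,λ}` is invariant under the adjacency operator on `C_3^N`. -/
theorem adjacency_invariant_C3 (N r : ℕ) (hN : 1 ≤ N) (lam : ℂ) :
    ∀ g ∈ Vspace N r lam, Aop N 3 g ∈ Vspace N r lam :=
  adjacency_invariant_C3_general N r lam
end

section
/- Let m = 4 and p, q ∈ ℕ, and set r = p + 2q. Define m(r,k) ∈ ℤ recursively by m(r,0) = 2(N − r) and m(r,k) = m(r,k−1) + 2(N − (r + k)) for k ≥ 1. If f is a vertex function on C_4^N supported in Σ_{p,q} with A_- f = 0, then for every k ∈ ℕ, A_-(A_+^{k+1} f) = m(r,k) • (A_+^k f). -/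
/-!
On `C_4^N` both `A₊` and `A₋` split into sums over coordinates `k` of operators that only move
the `k`-th coordinate. Pieces acting on different coordinates commute, and on one coordinate
(the 4-cycle, with levels `0, 1, 2, 1`) the commutator of the two pieces is multiplication by
`2 - 2 d_k(v)`. Summing over `k`, `A₋ A₊ - A₊ A₋` is multiplication by `2N - 2 d(v)`.
As `A₊^k f` is supported on the sphere of radius `r + k`, induction on `k`, started by
`A₋ f = 0`, yields exactly the recursion defining `m(r, k)`.
-/

open Finset

/-- The multiplier `m(r,k)`: `m(r,0) = 2(N - r)` and
`m(r,k) = m(r,k-1) + 2(N - (r + k))`. -/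
def mc4 (N r : ℕ) : ℕ → ℤ
  | 0 => 2 * ((N : ℤ) - (r : ℤ))
  | k + 1 => mc4 N r k + 2 * ((N : ℤ) - ((r : ℤ) + ((k : ℤ) + 1)))

open Function

def cycLevel (m : ℕ) (a : ZMod m) : ℕ := min a.val (m - a.val)

def outerNbrs (m : ℕ) (a : ZMod m) : Finset (ZMod m) :=
  ({a + 1, a - 1} : Finset (ZMod m)).filter fun x => cycLevel m x < cycLevel m a

def innerNbrs (m : ℕ) (a : ZMod m) : Finset (ZMod m) :=
  ({a + 1, a - 1} : Finset (ZMod m)).filter fun x => cycLevel m a < cycLevel m x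

def AplusAt (N m : ℕ) (k : Fin N) (f : (Fin N → ZMod m) → ℂ) : (Fin N → ZMod m) → ℂ :=
  fun v => ∑ x ∈ outerNbrs m (v k), f (update v k x)

def AminusAt (N m : ℕ) (k : Fin N) (f : (Fin N → ZMod m) → ℂ) : (Fin N → ZMod m) → ℂ :=
  fun v => ∑ x ∈ innerNbrs m (v k), f (update v k x)

section General

variable {N m : ℕ}

theorem distO_update_add (v : Fin N → ZMod m) (k : Fin N) (x : ZMod m) :
    distO N m (update v k x) + cycLevel m (v k) = distO N m v + cycLevel m x := by
  have hlev : ∀ w : Fin N → ZMod m, distO N m w = ∑ i, (cycLevel m ∘ w) i := fun _ => rfl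
  rw [hlev, hlev, comp_update, Finset.sum_update_of_mem (Finset.mem_univ k),
    Finset.sum_eq_add_sum_sdiff_singleton_of_mem (Finset.mem_univ k) (cycLevel m ∘ v)]
  simp only [comp_apply]
  ring

theorem add_eV_eq_update (v : Fin N → ZMod m) (k : Fin N) :
    v + eV N m k = update v k (v k + 1) := by
  ext j
  by_cases hj : j = k <;> simp [eV, hj]

theorem sub_eV_eq_update (v : Fin N → ZMod m) (k : Fin N) :
    v - eV N m k = update v k (v k - 1) := by
  ext j
  by_cases hj : j = k <;> simp [eV, hj]

theorem adj_iff_exists_update (v w : Fin N → ZMod m) :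
    adj N m v w ↔ ∃ k, ∃ x ∈ ({v k + 1, v k - 1} : Finset (ZMod m)), update v k x = w := by
  simp [adj, add_eV_eq_update, sub_eV_eq_update, eq_comm]

open Classical in
theorem sum_adj_eq [Fact (1 < m)] (v : Fin N → ZMod m) (g : (Fin N → ZMod m) → ℂ) :
    ∑ w ∈ Finset.univ.filter (adj N m v), g w
      = ∑ k, ∑ x ∈ ({v k + 1, v k - 1} : Finset (ZMod m)), g (update v k x) := by
  have hne : ∀ k, ∀ x ∈ ({v k + 1, v k - 1} : Finset (ZMod m)), x ≠ v k := by
    intro k x hx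
    simp only [Finset.mem_insert, Finset.mem_singleton] at hx
    rcases hx with rfl | rfl <;> simp
  rw [Finset.sum_sigma']
  symm
  refine Finset.sum_bij (fun kx _ => update v kx.1 kx.2) ?_ ?_ ?_ (fun _ _ => rfl)
  · rintro ⟨k, x⟩ hkx
    exact Finset.mem_filter.2
      ⟨Finset.mem_univ _, (adj_iff_exists_update v _).2 ⟨k, x, (Finset.mem_sigma.1 hkx).2, rfl⟩⟩
  · rintro ⟨k, x⟩ hkx ⟨l, y⟩ hly h
    simp only [Finset.mem_sigma] at hkx hly
    obtain rfl : k = l := by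
      by_contra hkl
      exact hne k x hkx.2 (by simpa [update_of_ne hkl] using congrFun h k)
    simpa using congrFun h k
  · intro w hw
    obtain ⟨k, x, hx, rfl⟩ := (adj_iff_exists_update v w).1 (Finset.mem_filter.1 hw).2
    exact ⟨⟨k, x⟩, by simpa using hx, rfl⟩

theorem Aplus_eq_sum_AplusAt [Fact (1 < m)] (f : (Fin N → ZMod m) → ℂ) :
    Aplus N m f = ∑ k, AplusAt N m k f := by
  classical
  ext v
  simp only [Aplus, ite_and, Finset.sum_apply, AplusAt, outerNbrs]
  rw [← Finset.sum_filter, sum_adj_eq]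
  refine Finset.sum_congr rfl fun k _ => ?_
  rw [Finset.sum_filter]
  refine Finset.sum_congr rfl fun x _ => ?_
  have := distO_update_add v k x
  exact if_congr (by omega) rfl rfl

theorem Aminus_eq_sum_AminusAt [Fact (1 < m)] (f : (Fin N → ZMod m) → ℂ) :
    Aminus N m f = ∑ k, AminusAt N m k f := by
  classical
  ext v
  simp only [Aminus, ite_and, Finset.sum_apply, AminusAt, innerNbrs]
  rw [← Finset.sum_filter, sum_adj_eq]
  refine Finset.sum_congr rfl fun k _ => ?_
  rw [Finset.sum_filter]
  refine Finset.sum_congr rfl fun x _ => ?_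
  have := distO_update_add v k x
  exact if_congr (by omega) rfl rfl

theorem AplusAt_sum {ι : Type*} (k : Fin N) (s : Finset ι) (g : ι → (Fin N → ZMod m) → ℂ) :
    AplusAt N m k (∑ i ∈ s, g i) = ∑ i ∈ s, AplusAt N m k (g i) := by
  ext v
  simp only [AplusAt, Finset.sum_apply]
  exact Finset.sum_comm

theorem AminusAt_sum {ι : Type*} (k : Fin N) (s : Finset ι) (g : ι → (Fin N → ZMod m) → ℂ) :
    AminusAt N m k (∑ i ∈ s, g i) = ∑ i ∈ s, AminusAt N m k (g i) := by
  ext v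
  simp only [AminusAt, Finset.sum_apply]
  exact Finset.sum_comm

theorem AminusAt_AplusAt_of_ne {k l : Fin N} (hkl : k ≠ l) (f : (Fin N → ZMod m) → ℂ) :
    AminusAt N m k (AplusAt N m l f) = AplusAt N m l (AminusAt N m k f) := by
  ext v
  simp only [AminusAt, AplusAt, update_of_ne hkl, update_of_ne hkl.symm, update_comm hkl]
  exact Finset.sum_comm

theorem Aplus_smul [NeZero m] (c : ℂ) (f : (Fin N → ZMod m) → ℂ) :
    Aplus N m (c • f) = c • Aplus N m f := by
  ext v
  simp [Aplus, Finset.mul_sum]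

theorem Aplus_zero [NeZero m] : Aplus N m (0 : (Fin N → ZMod m) → ℂ) = 0 := by
  ext v
  simp [Aplus]

end General

section Four

instance : Fact (1 < 4) := ⟨by norm_num⟩

theorem sum_innerNbrs_outerNbrs (φ : ZMod 4 → ℂ) (a : ZMod 4) :
    ∑ x ∈ innerNbrs 4 a, ∑ y ∈ outerNbrs 4 x, φ y
      = ∑ x ∈ outerNbrs 4 a, ∑ y ∈ innerNbrs 4 x, φ y + (2 - 2 * cycLevel 4 a) * φ a := by
  have hinner : innerNbrs 4 0 = {1, 3} ∧ innerNbrs 4 1 = {2} ∧ innerNbrs 4 2 = ∅ ∧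
      innerNbrs 4 3 = {2} := by decide
  have houter : outerNbrs 4 0 = ∅ ∧ outerNbrs 4 1 = {0} ∧ outerNbrs 4 2 = {1, 3} ∧
      outerNbrs 4 3 = {0} := by decide
  have hlevel : cycLevel 4 0 = 0 ∧ cycLevel 4 1 = 1 ∧ cycLevel 4 2 = 2 ∧ cycLevel 4 3 = 1 := by
    decide
  obtain rfl | rfl | rfl | rfl : a = 0 ∨ a = 1 ∨ a = 2 ∨ a = 3 := by revert a; decide
  all_goals
    simp [hinner, houter, hlevel, Finset.sum_pair (show (1 : ZMod 4) ≠ 3 by decide)]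
  all_goals ring

variable {N : ℕ}

theorem AminusAt_AplusAt_self (k : Fin N) (f : (Fin N → ZMod 4) → ℂ) :
    AminusAt N 4 k (AplusAt N 4 k f)
      = AplusAt N 4 k (AminusAt N 4 k f) + fun v => (2 - 2 * cycLevel 4 (v k)) * f v := by
  ext v
  simpa [AminusAt, AplusAt] using sum_innerNbrs_outerNbrs (fun x => f (update v k x)) (v k)

theorem Aminus_Aplus_eq (f : (Fin N → ZMod 4) → ℂ) :
    Aminus N 4 (Aplus N 4 f)
      = Aplus N 4 (Aminus N 4 f) + fun v => (2 * N - 2 * distO N 4 v) * f v := by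
  ext v
  simp only [Aplus_eq_sum_AplusAt, Aminus_eq_sum_AminusAt, AplusAt_sum, AminusAt_sum,
    Finset.sum_apply, Pi.add_apply]
  rw [Finset.sum_comm (f := fun l k => AplusAt N 4 l (AminusAt N 4 k f) v)]
  have hdiag : ∀ k, ∑ l, AminusAt N 4 k (AplusAt N 4 l f) v
      = ∑ l, AplusAt N 4 l (AminusAt N 4 k f) v + (2 - 2 * cycLevel 4 (v k)) * f v := by
    intro k
    rw [← sub_eq_iff_eq_add', ← Finset.sum_sub_distrib,
      Finset.sum_eq_single k (fun l _ hlk => by rw [AminusAt_AplusAt_of_ne hlk.symm, sub_self])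
        (by simp)]
    simp [AminusAt_AplusAt_self]
  have hsum : ∑ k, (2 - 2 * (cycLevel 4 (v k) : ℂ)) = 2 * N - 2 * distO N 4 v := by
    simp [distO, lev, cycLevel, Finset.sum_sub_distrib, Finset.mul_sum, mul_comm]
  rw [Finset.sum_congr rfl fun k _ => hdiag k, Finset.sum_add_distrib, ← Finset.sum_mul, hsum]

theorem cycLevel_eq_succ_of_mem_outerNbrs {a x : ZMod 4} (hx : x ∈ outerNbrs 4 a) :
    cycLevel 4 a = cycLevel 4 x + 1 := by
  revert a x
  decide

theorem Aplus_apply_eq_zero_of_distO_ne {d : ℕ} {g : (Fin N → ZMod 4) → ℂ}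
    (hg : ∀ v, distO N 4 v ≠ d → g v = 0) (v : Fin N → ZMod 4) (hv : distO N 4 v ≠ d + 1) :
    Aplus N 4 g v = 0 := by
  rw [Aplus_eq_sum_AplusAt, Finset.sum_apply]
  refine Finset.sum_eq_zero fun k _ => Finset.sum_eq_zero fun x hx => hg _ ?_
  have := distO_update_add v k x
  have := cycLevel_eq_succ_of_mem_outerNbrs hx
  omega

theorem Aminus_Aplus_eq_of_distO_ne {d : ℕ} {g : (Fin N → ZMod 4) → ℂ}
    (hg : ∀ v, distO N 4 v ≠ d → g v = 0) :
    Aminus N 4 (Aplus N 4 g) = Aplus N 4 (Aminus N 4 g) + (2 * N - 2 * d : ℂ) • g := by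
  rw [Aminus_Aplus_eq]
  congr 1
  ext v
  by_cases hv : distO N 4 v = d
  · simp [hv]
  · simp [hg v hv]

theorem distO_eq_cardLev (v : Fin N → ZMod 4) :
    distO N 4 v = cardLev N 4 v 1 + 2 * cardLev N 4 v 2 := by
  have hlev : ∀ x : ZMod 4, cycLevel 4 x
      = (if cycLevel 4 x = 1 then 1 else 0) + 2 * (if cycLevel 4 x = 2 then 1 else 0) := by
    decide
  simp only [distO, cardLev, Finset.card_filter, Finset.mul_sum, ← Finset.sum_add_distrib]
  exact Finset.sum_congr rfl fun k _ => hlev (v k)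

end Four

theorem lowering_identity_C4_general (N p q : ℕ)
    (f : (Fin N → ZMod 4) → ℂ)
    (hf : ∀ v, ¬(cardLev N 4 v 1 = p ∧ cardLev N 4 v 2 = q) → f v = 0)
    (hker : Aminus N 4 f = 0) :
    ∀ k : ℕ, Aminus N 4 ((Aplus N 4)^[k + 1] f)
      = ((mc4 N (p + 2 * q) k : ℂ)) • (Aplus N 4)^[k] f := by
  have hsupp : ∀ k v, distO N 4 v ≠ p + 2 * q + k → (Aplus N 4)^[k] f v = 0 := by
    intro k
    induction k with
    | zero => exact fun v hv => hf v fun ⟨h1, h2⟩ => hv (by rw [distO_eq_cardLev, h1, h2]; rfl)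
    | succ k ih =>
      intro v hv
      rw [iterate_succ_apply']
      exact Aplus_apply_eq_zero_of_distO_ne ih v hv
  intro k
  induction k with
  | zero =>
    rw [iterate_one, Aminus_Aplus_eq_of_distO_ne (g := f) (hsupp 0), hker, Aplus_zero, zero_add,
      iterate_zero_apply]
    congr 1
    push_cast [mc4]
    ring
  | succ k ih =>
    rw [iterate_succ_apply', Aminus_Aplus_eq_of_distO_ne (hsupp (k + 1)), ih, Aplus_smul,
      ← iterate_succ_apply' (Aplus N 4) k f, ← add_smul]
    congr 1
    push_cast [mc4]
    ring

/-- on `C_4^N`, if `f` is supported in `Σ_{p,q}` and `A₋ f = 0`, then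
`A₋ A₊^{k+1} f = m(r,k) • A₊^k f`, where `r = p + 2q`. -/
theorem lowering_identity_C4 (N p q : ℕ) (hN : 1 ≤ N)
    (f : (Fin N → ZMod 4) → ℂ)
    (hf : ∀ v, ¬(cardLev N 4 v 1 = p ∧ cardLev N 4 v 2 = q) → f v = 0)
    (hker : Aminus N 4 f = 0) :
    ∀ k : ℕ, Aminus N 4 ((Aplus N 4)^[k + 1] f)
      = ((mc4 N (p + 2 * q) k : ℂ)) • (Aplus N 4)^[k] f :=
  lowering_identity_C4_general N p q f hf hker
end
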